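/- Suppose for every measurable classifier φ : (Z^{n-1} × X) → [A], the prior-averaged excess risk ∫ E_{ℙ^n}[1{Y_n^{φ(F_{n-1},X_n)} ≠ 1} − 1{Y_n^{π_*(X_n)} ≠ 1}] dp(ℙ) ≥ ε. Then for every bandit policy π and every t ∈ [n], the prior-averaged expected instantaneous regret ∫ E_{ℙ^n}[Y_n^{π_*(X_n)} − Y_n^{π_t(X_n)}] dp(ℙ) ≥ ε, where π_t(X_n) denotes the action the policy π would select at round t given history {(X_s, Y_s)}_{s<t} and covariate X_n. -/

import Mathlib

/-!
At a round `t ≤ n` a policy has not seen the last sample, so evaluating it at the last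
covariate is a classifier of the kind the hypothesis covers. On one-hot rewards the 0-1 loss of
an action `a` is `1 - y a`, so that classifier's excess 0-1 risk is exactly the policy's regret.
-/

open MeasureTheory

/-- One-hot reward vectors: `𝒴_class = {y ∈ {0,1}^A : ∑ a, y a = 1}`. -/
def Yclass (A : ℕ) : Type :=
  {y : Fin A → ℝ // (∀ a, y a = 0 ∨ y a = 1) ∧ ∑ a, y a = 1}

instance (A : ℕ) : MeasurableSpace (Yclass A) := Subtype.instMeasurableSpace

def classifierOfPolicy {ι X Y α : Type*} (π : (ι → X × Y) → X → α) (last : ι)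
    (F : ι → X × Y) : α :=
  π F (F last).1

theorem measurable_classifierOfPolicy {ι X Y α : Type*} [MeasurableSpace X] [MeasurableSpace Y]
    [MeasurableSpace α] {π : (ι → X × Y) → X → α}
    (hπ : Measurable fun Fx : (ι → X × Y) × X => π Fx.1 Fx.2) (last : ι) :
    Measurable (classifierOfPolicy π last) :=
  hπ.comp (measurable_id.prodMk (measurable_pi_apply last).fst)

theorem classifierOfPolicy_congr {ι X Y α : Type*} {π : (ι → X × Y) → X → α} {last : ι}
    (hπ : ∀ F F' x, (∀ s, s ≠ last → F s = F' s) → π F x = π F' x)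
    {F F' : ι → X × Y} (hF : ∀ s, s ≠ last → F s = F' s) (hx : (F last).1 = (F' last).1) :
    classifierOfPolicy π last F = classifierOfPolicy π last F' := by
  rw [classifierOfPolicy, classifierOfPolicy, hπ F F' _ hF, hx]

theorem eq_of_eq_off_last_of_le {n : ℕ} {Z X α : Type*} {π : (Fin n → Z) → X → α} {t : ℕ}
    (ht : t ≤ n) {last : Fin n} (hlast : (last : ℕ) = n - 1)
    (hπ : ∀ F F' : Fin n → Z, ∀ x, (∀ s : Fin n, (s : ℕ) + 1 < t → F s = F' s) → π F x = π F' x)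
    (F F' : Fin n → Z) (x : X) (hF : ∀ s, s ≠ last → F s = F' s) : π F x = π F' x :=
  hπ F F' x fun s hs => hF s fun h => by omega

theorem Yclass.ite_ne_one_eq_one_sub {A : ℕ} (y : Yclass A) (a : Fin A) :
    (if y.1 a ≠ 1 then (1 : ℝ) else 0) = 1 - y.1 a := by
  rcases y.2.1 a with h | h <;> simp [h]

theorem Yclass.zeroOne_excess_eq_reward_gap {A : ℕ} (y : Yclass A) (a b : Fin A) :
    (if y.1 a ≠ 1 then (1 : ℝ) else 0) - (if y.1 b ≠ 1 then (1 : ℝ) else 0) = y.1 b - y.1 a := by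
  rw [y.ite_ne_one_eq_one_sub, y.ite_ne_one_eq_one_sub]
  ring

theorem classification_lower_bound_transfers_to_bandits_general
    {X : Type*} [MeasurableSpace X] (A : ℕ)
    (n : ℕ)
    {P : Type*} [MeasurableSpace P] (p : Measure P)
    (m : P → Measure (X × Yclass A))
    (πstar : P → X → Fin A) (ε : ℝ)
    -- the last coordinate, corresponding to the test point `(X_n, Y_n)`
    (last : Fin n) (hlast : (last : ℕ) = n - 1)
    -- hypothesis: every classifier using only `(F_{n-1}, X_n)` has
    -- prior-averaged excess risk at least `ε`
    (hclass : ∀ φ : (Fin n → X × Yclass A) → Fin A, Measurable φ →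
      (∀ F F' : Fin n → X × Yclass A,
        (∀ s, s ≠ last → F s = F' s) → (F last).1 = (F' last).1 → φ F = φ F') →
      ε ≤ ∫ Q, (∫ F, ((if ((F last).2 : Yclass A).1 (φ F) ≠ 1 then (1 : ℝ) else 0) -
            (if ((F last).2 : Yclass A).1 (πstar Q (F last).1) ≠ 1 then (1 : ℝ) else 0))
          ∂(Measure.pi fun _ => m Q)) ∂p)
    -- a bandit policy: `π t` selects an action from the history of the first
    -- `t - 1` samples together with a covariate
    (π : ℕ → (Fin n → X × Yclass A) → X → Fin A)
    (hπmeas : ∀ t, Measurable fun Fx : (Fin n → X × Yclass A) × X => π t Fx.1 Fx.2)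
    (hdep : ∀ t : ℕ, ∀ F F' : Fin n → X × Yclass A, ∀ x : X,
      (∀ s : Fin n, (s : ℕ) + 1 < t → F s = F' s) → π t F x = π t F' x) :
    ∀ t ∈ Finset.Icc 1 n,
      ε ≤ ∫ Q, (∫ F, (((F last).2 : Yclass A).1 (πstar Q (F last).1) -
            ((F last).2 : Yclass A).1 (π t F (F last).1))
          ∂(Measure.pi fun _ => m Q)) ∂p := by
  intro t ht
  have hignores_last := eq_of_eq_off_last_of_le (Finset.mem_Icc.1 ht).2 hlast (hdep t)
  have hrisk := hclass (classifierOfPolicy (π t) last)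
    (measurable_classifierOfPolicy (hπmeas t) last)
    (fun _ _ => classifierOfPolicy_congr hignores_last)
  refine hrisk.trans_eq (integral_congr_ae (.of_forall fun Q =>
    integral_congr_ae (.of_forall fun F => ?_)))
  exact Yclass.zeroOne_excess_eq_reward_gap _ _ _

theorem classification_lower_bound_transfers_to_bandits
    {X : Type*} [MeasurableSpace X] (A : ℕ) (hA : 0 < A)
    (n : ℕ) (hn : 0 < n)
    {P : Type*} [MeasurableSpace P] (p : Measure P) [IsProbabilityMeasure p]
    (m : P → Measure (X × Yclass A)) (hm : ∀ Q, IsProbabilityMeasure (m Q))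
    (πstar : P → X → Fin A) (ε : ℝ)
    -- the last coordinate, corresponding to the test point `(X_n, Y_n)`
    (last : Fin n) (hlast : (last : ℕ) = n - 1)
    -- hypothesis: every classifier using only `(F_{n-1}, X_n)` has
    -- prior-averaged excess risk at least `ε`
    (hclass : ∀ φ : (Fin n → X × Yclass A) → Fin A, Measurable φ →
      (∀ F F' : Fin n → X × Yclass A,
        (∀ s, s ≠ last → F s = F' s) → (F last).1 = (F' last).1 → φ F = φ F') →
      ε ≤ ∫ Q, (∫ F, ((if ((F last).2 : Yclass A).1 (φ F) ≠ 1 then (1 : ℝ) else 0) -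
            (if ((F last).2 : Yclass A).1 (πstar Q (F last).1) ≠ 1 then (1 : ℝ) else 0))
          ∂(Measure.pi fun _ => m Q)) ∂p)
    -- a bandit policy: `π t` selects an action from the history of the first
    -- `t - 1` samples together with a covariate
    (π : ℕ → (Fin n → X × Yclass A) → X → Fin A)
    (hπmeas : ∀ t, Measurable fun Fx : (Fin n → X × Yclass A) × X => π t Fx.1 Fx.2)
    (hdep : ∀ t : ℕ, ∀ F F' : Fin n → X × Yclass A, ∀ x : X,
      (∀ s : Fin n, (s : ℕ) + 1 < t → F s = F' s) → π t F x = π t F' x) :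
    ∀ t ∈ Finset.Icc 1 n,
      ε ≤ ∫ Q, (∫ F, (((F last).2 : Yclass A).1 (πstar Q (F last).1) -
            ((F last).2 : Yclass A).1 (π t F (F last).1))
          ∂(Measure.pi fun _ => m Q)) ∂p :=
  classification_lower_bound_transfers_to_bandits_general A n p m πstar ε last hlast hclass π hπmeas
    hdep
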